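/- arXiv:1907.04121 — 3 statements merged into one kernel-verified Lean document; each statement's English description precedes it below -/
import Mathlib

section
/- Let x ∈ W^λ and let s ∈ S' be a simple reflection such that sx ∉ xW_λ. Then sx ∈ W^λ, and the map z ↦ sz is a bijection from the coset xW_λ onto the coset (sx)W_λ such that for all z, z' ∈ xW_λ one has z ⋖ z' if and only if sz ⋖ sz' (i.e. left multiplication by s is an isomorphism of the directed graphs of Bruhat covers of the two cosets). -/
/-!
Setup: a Coxeter system `(W, S')` with Bruhat order defined via the subword property,
a subset `S` of the simple reflections (indexed by `S : Set B`), the standard parabolic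
subgroup `W_λ = ⟨S⟩`, and the set `W^λ` of minimal-length left coset representatives.
-/

namespace SingularBGG

variable {B W : Type*} [Group W] {M : CoxeterMatrix B}

/-- Bruhat order on a Coxeter group: `u ≤ v` iff some (equivalently, every) reduced word
for `v` contains a subword which is a reduced word for `u`. -/
def BruhatLE (cs : CoxeterSystem M W) (u v : W) : Prop :=
  ∃ ω : List B, cs.IsReduced ω ∧ cs.wordProd ω = v ∧
    ∃ ω' : List B, ω'.Sublist ω ∧ cs.IsReduced ω' ∧ cs.wordProd ω' = u

/-- Strict Bruhat order. -/
def BruhatLT (cs : CoxeterSystem M W) (u v : W) : Prop :=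
  BruhatLE cs u v ∧ u ≠ v

/-- Bruhat covering relation `u ⋖ v`: `u < v` and `ℓ(v) = ℓ(u) + 1`. -/
def BruhatCov (cs : CoxeterSystem M W) (u v : W) : Prop :=
  BruhatLT cs u v ∧ cs.length v = cs.length u + 1

/-- The standard parabolic subgroup `W_λ` generated by the simple reflections indexed
by `S`. -/
def paraSubgroup (cs : CoxeterSystem M W) (S : Set B) : Subgroup W :=
  Subgroup.closure (cs.simple '' S)

/-- The left coset `x·W_λ`. -/
def leftCosetOf (cs : CoxeterSystem M W) (S : Set B) (x : W) : Set W :=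
  {z : W | x⁻¹ * z ∈ paraSubgroup cs S}

/-- `x` is a minimal-length representative of its left coset `x·W_λ`, i.e. `x ∈ W^λ`. -/
def IsMinRep (cs : CoxeterSystem M W) (S : Set B) (x : W) : Prop :=
  ∀ z ∈ leftCosetOf cs S x, cs.length x ≤ cs.length z

/-!
Write `N(w, t) ∈ ZMod 2` for the parity of the number of occurrences of `t` in the right inversion
sequence of a word for `w`. It does not depend on the word because `W` acts on `W × ZMod 2` by
`sᵢ • (t, ε) = (sᵢ t sᵢ, ε + [t = sᵢ])`: the braid relations hold since `(sᵢ sⱼ) ^ mᵢⱼ = 1` makes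
every indicator sum over two full periods even. Then `N(w, t) = 1` iff `t` is a right inversion of
`w`, which gives the strong exchange and deletion properties, and
`N(a b, t) = N(b, t) + N(a, b t b⁻¹)`.

As `N(u, t) = 0` for `u ∈ W_λ` and `t ∉ W_λ`, and `x⁻¹ s x ∉ W_λ`, this cocycle identity shows that
`s` is a left descent either of every element of `x W_λ` or of none, and that `s x`, like `x`, has
no right inversion in `W_λ`. Such elements are exactly the minimal coset representatives, because
lengths add along `W_λ` to the right of them.

Finally, the subword order coincides with the order generated by the Bruhat graph, on which
`w ↦ max(w, s w)` and `w ↦ min(w, s w)` are monotone. So left multiplication by `s` preserves and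
reflects `≤` between elements on which `s` acts in the same direction, and shifts both lengths by
the same `±1`.
-/

open Relation
open scoped Classical

lemma conj_mem_iff_of_mem {G : Type*} [Group G] {H : Subgroup G} {g : G} (hg : g ∈ H) (t : G) :
    g * t * g⁻¹ ∈ H ↔ t ∈ H := by
  rw [Subgroup.mul_mem_cancel_right _ (inv_mem hg), Subgroup.mul_mem_cancel_left _ hg]

lemma inv_conj_mem_iff_of_mem {G : Type*} [Group G] {H : Subgroup G} {g : G} (hg : g ∈ H)
    (t : G) : g⁻¹ * t * g ∈ H ↔ t ∈ H := by
  simpa using conj_mem_iff_of_mem (inv_mem hg) t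

lemma sum_range_two_mul_ite_pow_eq_zero {G : Type*} [Monoid G] {p : G} {m : ℕ}
    (hp : p ^ m = 1) (t r : G) :
    ∑ l ∈ Finset.range (2 * m), (if p ^ l * t = r then 1 else 0 : ZMod 2) = 0 := by
  simp only [two_mul, Finset.sum_range_add, pow_add, hp, one_mul, CharTwo.add_self_eq_zero]

section

variable (cs : CoxeterSystem M W)

local prefix:100 "s" => cs.simple
local prefix:100 "π" => cs.wordProd
local prefix:100 "ℓ" => cs.length
local prefix:100 "ris" => cs.rightInvSeq

lemma simple_mul_mul_simple_eq_iff (i : B) (t u : W) : s i * t * s i = u ↔ t = s i * u * s i := by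
  constructor <;> rintro rfl <;> simp [mul_assoc]

noncomputable def parityPerm (i : B) : Equiv.Perm (W × ZMod 2) :=
  Function.Involutive.toPerm (fun p => (s i * p.1 * s i, p.2 + if p.1 = s i then 1 else 0)) <| by
    rintro ⟨t, ε⟩
    dsimp only
    rw [simple_mul_mul_simple_eq_iff]
    simp [mul_assoc, add_assoc, CharTwo.add_self_eq_zero]

lemma parityPerm_apply (i : B) (t : W) (ε : ZMod 2) :
    parityPerm cs i (t, ε) = (s i * t * s i, ε + if t = s i then 1 else 0) := rfl

lemma parityPerm_mul_parityPerm_apply (i j : B) (t : W) (ε : ZMod 2) :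
    (parityPerm cs i * parityPerm cs j) (t, ε) =
      ((s i * s j) * t * (s i * s j)⁻¹,
        ε + ((if t = s j then 1 else 0) + if t = s j * s i * s j then 1 else 0)) := by
  simp only [Equiv.Perm.mul_apply, parityPerm_apply, simple_mul_mul_simple_eq_iff, add_assoc]
  simp only [mul_inv_rev, cs.inv_simple, mul_assoc]

lemma parityPerm_mul_parityPerm_pow_apply (i j : B) (k : ℕ) (t : W) (ε : ZMod 2) :
    ((parityPerm cs i * parityPerm cs j) ^ k) (t, ε) =
      ((s i * s j) ^ k * t * ((s i * s j) ^ k)⁻¹,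
        ε + ∑ l ∈ Finset.range (2 * k), if (s i * s j) ^ l * t = s j then 1 else 0) := by
  set p := s i * s j with hp_def
  have hp : p * s j * p = s j := by simp [p, mul_assoc]
  induction k generalizing t ε with
  | zero => simp
  | succ k ih =>
    have hshift (l : ℕ) : p ^ l * (p * t * p⁻¹) = s j ↔ p ^ (l + 2) * t = s j := by
      rw [show p ^ (l + 2) * t = p * (p ^ l * (p * t * p⁻¹)) * p by group]
      generalize p ^ l * (p * t * p⁻¹) = x
      constructor <;> intro h
      · rw [h, hp]
      · calc x = p⁻¹ * (p * x * p) * p⁻¹ := by group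
          _ = p⁻¹ * (p * s j * p) * p⁻¹ := by rw [h, hp]
          _ = s j := by group
    have h0 : t = s j ↔ p ^ 0 * t = s j := by rw [pow_zero, one_mul]
    have h1 : t = s j * s i * s j ↔ p ^ 1 * t = s j := by
      simp only [pow_one, p, mul_assoc]
      constructor <;> intro h
      · simp [h, ← mul_assoc]
      · calc t = s j * s i * (s i * (s j * t)) := by simp [← mul_assoc]
          _ = s j * (s i * s j) := by rw [h, mul_assoc]
    rw [pow_succ, Equiv.Perm.mul_apply, parityPerm_mul_parityPerm_apply, ← hp_def, ih]
    refine Prod.ext (by rw [pow_succ]; group) ?_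
    rw [show 2 * (k + 1) = 2 * k + 1 + 1 by ring, Finset.sum_range_succ', Finset.sum_range_succ']
    simp only [hshift, h0, h1]
    abel

lemma parityPerm_isLiftable : M.IsLiftable (parityPerm cs) := by
  intro i j
  ext ⟨t, ε⟩ : 1
  rw [parityPerm_mul_parityPerm_pow_apply, cs.simple_mul_simple_pow,
    sum_range_two_mul_ite_pow_eq_zero (cs.simple_mul_simple_pow i j)]
  simp

noncomputable def parityRep : W →* Equiv.Perm (W × ZMod 2) :=
  cs.lift ⟨parityPerm cs, parityPerm_isLiftable cs⟩

/-- The parity of the number of occurrences of `t` in the right inversion sequence of any word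
for `w`. -/
noncomputable def invParity (w t : W) : ZMod 2 := (parityRep cs w (t, 0)).2

lemma parityRep_wordProd_apply (ω : List B) (t : W) (ε : ZMod 2) :
    parityRep cs (π ω) (t, ε) = (π ω * t * (π ω)⁻¹, ε + (ris ω).count t) := by
  induction ω generalizing t ε with
  | nil => simp
  | cons i ω ih =>
    rw [cs.wordProd_cons, map_mul, Equiv.Perm.mul_apply, ih, parityRep, cs.lift_apply_simple,
      parityPerm_apply]
    simp only [CoxeterSystem.rightInvSeq, List.count_cons]
    have hcond : π ω * t * (π ω)⁻¹ = s i ↔ (π ω)⁻¹ * s i * π ω = t := by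
      constructor <;> intro h <;> rw [← h] <;> group
    refine Prod.ext (by simp [mul_assoc]) ?_
    simp only [hcond, beq_iff_eq, Nat.cast_add, Nat.cast_ite, Nat.cast_one, Nat.cast_zero,
      add_assoc]

lemma invParity_wordProd (ω : List B) (t : W) : invParity cs (π ω) t = (ris ω).count t := by
  simp [invParity, parityRep_wordProd_apply]

lemma parityRep_apply (w t : W) (ε : ZMod 2) :
    parityRep cs w (t, ε) = (w * t * w⁻¹, ε + invParity cs w t) := by
  obtain ⟨ω, rfl⟩ := cs.wordProd_surjective w
  rw [parityRep_wordProd_apply, invParity_wordProd]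

lemma invParity_mul (a b t : W) :
    invParity cs (a * b) t = invParity cs b t + invParity cs a (b * t * b⁻¹) := by
  rw [invParity, map_mul, Equiv.Perm.mul_apply, parityRep_apply, parityRep_apply, zero_add]

lemma invParity_one (t : W) : invParity cs 1 t = 0 := by
  simp [invParity]

lemma invParity_simple (i : B) (t : W) : invParity cs (s i) t = if t = s i then 1 else 0 := by
  simp [invParity, parityRep, parityPerm_apply]

lemma invParity_inv (w t : W) : invParity cs w⁻¹ t = invParity cs w (w⁻¹ * t * w) := by
  have h := invParity_mul cs w w⁻¹ t
  rw [mul_inv_cancel, inv_inv, invParity_one] at h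
  rw [eq_neg_of_add_eq_zero_left h.symm, ZMod.neg_eq_self_mod_two]

lemma invParity_self {t : W} (ht : cs.IsReflection t) : invParity cs t t = 1 := by
  obtain ⟨w, i, rfl⟩ := ht
  have hconj : w⁻¹ * (w * s i * w⁻¹) * w = s i := by group
  rw [invParity_mul, invParity_inv, inv_inv, hconj, invParity_mul, invParity_simple, if_pos rfl,
    cs.simple_mul_simple_self, one_mul, cs.inv_simple, add_left_comm, CharTwo.add_self_eq_zero,
    add_zero]

lemma mem_rightInvSeq_of_invParity_eq_one {ω : List B} {t : W}
    (h : invParity cs (π ω) t = 1) : t ∈ ris ω := by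
  rw [invParity_wordProd] at h
  by_contra hmem
  simp [List.count_eq_zero.mpr hmem] at h

lemma invParity_eq_one_iff {t : W} (ht : cs.IsReflection t) (w : W) :
    invParity cs w t = 1 ↔ cs.IsRightInversion w t := by
  have of_eq_one (v : W) (h : invParity cs v t = 1) : cs.IsRightInversion v t := by
    obtain ⟨ω, hω, rfl⟩ := cs.exists_isReduced v
    exact cs.isRightInversion_of_mem_rightInvSeq hω (mem_rightInvSeq_of_invParity_eq_one cs h)
  refine ⟨of_eq_one w, fun hw => ?_⟩
  have hwt : invParity cs (w * t) t = 0 := by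
    rcases (show ∀ x : ZMod 2, x = 0 ∨ x = 1 by decide) (invParity cs (w * t) t) with h | h
    · exact h
    · exact absurd hw (ht.isRightInversion_mul_left_iff.mp (of_eq_one _ h))
  have := invParity_mul cs (w * t) t t
  rwa [mul_assoc, ht.mul_self, mul_one, invParity_self cs ht, one_mul, ht.inv, hwt,
    add_zero] at this

lemma exists_wordProd_eraseIdx_eq_mul {ω : List B} {t : W} (h : cs.IsRightInversion (π ω) t) :
    ∃ j < ω.length, π (ω.eraseIdx j) = π ω * t := by
  obtain ⟨j, hj, rfl⟩ := List.getElem_of_mem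
    (mem_rightInvSeq_of_invParity_eq_one cs ((invParity_eq_one_iff cs h.1 _).mpr h))
  refine ⟨j, by simpa using hj, ?_⟩
  rw [← cs.wordProd_mul_getD_rightInvSeq, List.getD_eq_getElem]

lemma exists_sublist_isReduced_wordProd_eq (ω : List B) :
    ∃ σ, σ.Sublist ω ∧ cs.IsReduced σ ∧ π σ = π ω := by
  induction ω using List.reverseRecOn with
  | nil => exact ⟨[], .refl _, by simp [CoxeterSystem.IsReduced], rfl⟩
  | append_singleton ω i ih =>
    obtain ⟨σ, hsub, hσ, hπ⟩ := ih
    have hπi : π (ω ++ [i]) = π σ * s i := by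
      rw [cs.wordProd_append, hπ, cs.wordProd_singleton]
    by_cases hdesc : cs.IsRightDescent (π σ) i
    · obtain ⟨j, hj, hj'⟩ := exists_wordProd_eraseIdx_eq_mul cs
        ((cs.isRightInversion_simple_iff_isRightDescent _ i).mpr hdesc)
      refine ⟨σ.eraseIdx j, (List.eraseIdx_sublist σ j).trans
        (hsub.trans (List.sublist_append_left _ _)), ?_, by rw [hj', hπi]⟩
      have := cs.isRightDescent_iff.mp hdesc
      rw [CoxeterSystem.IsReduced, hj', List.length_eraseIdx_of_lt hj, ← hσ]
      omega
    · refine ⟨σ ++ [i], hsub.append (.refl _), ?_,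
        by rw [hπi, cs.wordProd_append, cs.wordProd_singleton]⟩
      have := cs.not_isRightDescent_iff.mp hdesc
      rw [CoxeterSystem.IsReduced, cs.wordProd_append, cs.wordProd_singleton, this, hσ]
      simp

lemma invParity_eq_zero_iff {t : W} (ht : cs.IsReflection t) (w : W) :
    invParity cs w t = 0 ↔ ¬cs.IsRightInversion w t := by
  rw [← invParity_eq_one_iff cs ht]
  generalize invParity cs w t = x
  revert x
  decide

lemma isRightInversion_simple_mul_iff {w t : W} {i : B} (h : w * t * w⁻¹ ≠ s i) :
    cs.IsRightInversion (s i * w) t ↔ cs.IsRightInversion w t := by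
  by_cases ht : cs.IsReflection t
  · rw [← invParity_eq_one_iff cs ht, ← invParity_eq_one_iff cs ht, invParity_mul,
      invParity_simple, if_neg h, add_zero]
  · simp [CoxeterSystem.IsRightInversion, ht]

lemma isLeftDescent_iff_isRightInversion (w : W) (i : B) :
    cs.IsLeftDescent w i ↔ cs.IsRightInversion w (w⁻¹ * s i * w) := by
  have := (cs.isReflection_simple i).conj w⁻¹
  rw [inv_inv] at this
  simp [CoxeterSystem.IsLeftDescent, CoxeterSystem.IsRightInversion, ← mul_assoc, this]

lemma invParity_eq_zero_of_mem_of_notMem {S : Set B} {u t : W} (hu : u ∈ paraSubgroup cs S)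
    (ht : t ∉ paraSubgroup cs S) : invParity cs u t = 0 := by
  induction hu using Subgroup.closure_induction generalizing t with
  | mem x hx =>
    obtain ⟨i, hi, rfl⟩ := hx
    rw [invParity_simple, if_neg]
    rintro rfl
    exact ht (Subgroup.subset_closure ⟨i, hi, rfl⟩)
  | one => exact invParity_one cs t
  | mul a b _ hb iha ihb =>
    rw [invParity_mul, ihb ht, zero_add]
    exact iha (by rwa [conj_mem_iff_of_mem (H := paraSubgroup cs S) hb])
  | inv a ha iha =>
    rw [invParity_inv, iha (by rwa [inv_conj_mem_iff_of_mem (H := paraSubgroup cs S) ha])]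

lemma isRightInversion_mul_conj_iff {S : Set B} {u t : W} (hu : u ∈ paraSubgroup cs S)
    (ht : t ∉ paraSubgroup cs S) (x : W) :
    cs.IsRightInversion (x * u) (u⁻¹ * t * u) ↔ cs.IsRightInversion x t := by
  have hrefl_iff : cs.IsReflection (u⁻¹ * t * u) ↔ cs.IsReflection t := by
    simpa using cs.isReflection_conj_iff u⁻¹ t
  by_cases hrefl : cs.IsReflection t
  · rw [← invParity_eq_one_iff cs hrefl, ← invParity_eq_one_iff cs (hrefl_iff.mpr hrefl),
      invParity_mul, invParity_eq_zero_of_mem_of_notMem cs hu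
        (by rwa [inv_conj_mem_iff_of_mem hu]), zero_add]
    group
  · simp [CoxeterSystem.IsRightInversion, hrefl, hrefl_iff]

lemma isLeftDescent_mul_iff_of_mem {S : Set B} {x u : W} {i : B} (hu : u ∈ paraSubgroup cs S)
    (hx : x⁻¹ * s i * x ∉ paraSubgroup cs S) :
    cs.IsLeftDescent (x * u) i ↔ cs.IsLeftDescent x i := by
  rw [isLeftDescent_iff_isRightInversion, isLeftDescent_iff_isRightInversion,
    ← isRightInversion_mul_conj_iff cs hu hx]
  group

lemma length_mul_of_mem {S : Set B} {w : W}
    (hw : ∀ r ∈ paraSubgroup cs S, ¬cs.IsRightInversion w r) {u : W}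
    (hu : u ∈ paraSubgroup cs S) : ℓ (w * u) = ℓ w + ℓ u := by
  induction hn : ℓ u using Nat.strong_induction_on generalizing u with
  | _ n ih =>
  rcases eq_or_ne u 1 with rfl | hne
  · simp [← hn]
  obtain ⟨i, hi⟩ := cs.exists_rightDescent_of_ne_one hne
  have hinv : cs.IsRightInversion u (s i) :=
    (cs.isRightInversion_simple_iff_isRightDescent u i).mpr hi
  have hsi : s i ∈ paraSubgroup cs S := by
    by_contra hsi
    exact (invParity_eq_zero_iff cs (cs.isReflection_simple i) u).mp
      (invParity_eq_zero_of_mem_of_notMem cs hu hsi) hinv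
  set u' := u * s i
  have hu' : u' ∈ paraSubgroup cs S := mul_mem hu hsi
  have hlen : ℓ u' + 1 = ℓ u := cs.isRightDescent_iff.mp hi
  have hrefl := cs.isReflection_simple i
  have hu'_asc : ¬cs.IsRightInversion u' (s i) :=
    hrefl.isRightInversion_mul_left_iff.mp (by simpa [u', mul_assoc] using hinv)
  have hwu'_asc : ¬cs.IsRightInversion (w * u') (s i) := by
    rw [← invParity_eq_zero_iff cs hrefl, invParity_mul,
      (invParity_eq_zero_iff cs hrefl u').mpr hu'_asc,
      (invParity_eq_zero_iff cs (hrefl.conj u') w).mpr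
        (hw _ ((conj_mem_iff_of_mem hu' _).mpr hsi)), add_zero]
  have hstep : ℓ (w * u' * s i) = ℓ (w * u') + 1 := cs.not_isRightDescent_iff.mp
    (by rwa [← cs.isRightInversion_simple_iff_isRightDescent])
  rw [show w * u = w * u' * s i by simp [u', mul_assoc], hstep, ih (ℓ u') (by omega) hu' rfl]
  omega

lemma isMinRep_iff {S : Set B} {x : W} :
    IsMinRep cs S x ↔ ∀ r ∈ paraSubgroup cs S, ¬cs.IsRightInversion x r := by
  constructor
  · intro hx r hr hinv
    have := hx (x * r) (by simpa [leftCosetOf] using hr)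
    exact absurd hinv.2 (not_lt.mpr this)
  · intro hx z hz
    have := length_mul_of_mem cs hx hz
    rw [mul_inv_cancel_left] at this
    omega

lemma bijOn_mul_left_leftCosetOf (S : Set B) (g x : W) :
    Set.BijOn (g * ·) (leftCosetOf cs S x) (leftCosetOf cs S (g * x)) :=
  (Equiv.mulLeft g).bijOn fun z => by simp [leftCosetOf, mul_assoc]

def BruhatEdge (u w : W) : Prop := ∃ t, cs.IsReflection t ∧ w = u * t ∧ ℓ u < ℓ w

lemma bruhatEdge_simple_mul_of_not_isLeftDescent {w : W} {i : B} (h : ¬cs.IsLeftDescent w i) :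
    BruhatEdge cs w (s i * w) := by
  refine ⟨w⁻¹ * s i * w, by simpa using (cs.isReflection_simple i).conj w⁻¹, by group, ?_⟩
  rw [cs.not_isLeftDescent_iff.mp h]
  omega

lemma bruhatEdge_simple_mul_of_isLeftDescent {w : W} {i : B} (h : cs.IsLeftDescent w i) :
    BruhatEdge cs (s i * w) w := by
  simpa using bruhatEdge_simple_mul_of_not_isLeftDescent cs
    (cs.isLeftDescent_iff_not_isLeftDescent_mul.mp h)

lemma BruhatEdge.simple_mul {u w : W} (h : BruhatEdge cs u w) {i : B}
    (hlt : ℓ (s i * u) < ℓ (s i * w)) :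
    BruhatEdge cs (s i * u) (s i * w) := by
  obtain ⟨t, ht, rfl, -⟩ := h
  exact ⟨t, ht, by group, hlt⟩

lemma BruhatEdge.length_eq_or_add_three_le {u w : W} (h : BruhatEdge cs u w) :
    ℓ w = ℓ u + 1 ∨ ℓ u + 3 ≤ ℓ w := by
  obtain ⟨t, ht, rfl, hlt⟩ := h
  have := cs.length_mul_mod_two u t
  obtain ⟨k, hk⟩ := ht.odd_length
  omega

lemma BruhatEdge.simple_mul_eq {u w : W} {i : B} (h : BruhatEdge cs u w) (hlen : ℓ w = ℓ u + 1)
    (hu : ¬cs.IsLeftDescent u i) (hw : cs.IsLeftDescent w i) : s i * u = w := by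
  obtain ⟨t, ht, rfl, hlt⟩ := h
  by_contra hne
  have hconj : s i * (u * t) * t * (s i * (u * t))⁻¹ ≠ s i := by
    intro h
    exact hne (by simpa [mul_assoc, ht.mul_self] using mul_inv_eq_iff_eq_mul.mp h)
  have hinv : cs.IsRightInversion (s i * (u * t)) t := by
    rw [← isRightInversion_simple_mul_iff cs hconj, cs.simple_mul_simple_cancel_left]
    refine ⟨ht, ?_⟩
    rw [mul_assoc, ht.mul_self, mul_one]
    exact hlt
  have h1 := hinv.2
  rw [mul_assoc, mul_assoc u, ht.mul_self, mul_one] at h1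
  have := cs.not_isLeftDescent_iff.mp hu
  have := cs.isLeftDescent_iff.mp hw
  omega

noncomputable def leftMax (i : B) (w : W) : W := if cs.IsLeftDescent w i then w else s i * w

noncomputable def leftMin (i : B) (w : W) : W := if cs.IsLeftDescent w i then s i * w else w

lemma BruhatEdge.leftMax_leftMin {u w : W} (h : BruhatEdge cs u w) (i : B) :
    ReflTransGen (BruhatEdge cs) (leftMax cs i u) (leftMax cs i w) ∧
      ReflTransGen (BruhatEdge cs) (leftMin cs i u) (leftMin cs i w) := by
  have hlt : ℓ u < ℓ w := let ⟨_, _, _, hlt⟩ := h; hlt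
  by_cases hu : cs.IsLeftDescent u i <;> by_cases hw : cs.IsLeftDescent w i <;>
    simp only [leftMax, leftMin, hu, hw, if_true, if_false]
  · have := cs.isLeftDescent_iff.mp hu
    have := cs.isLeftDescent_iff.mp hw
    exact ⟨.single h, .single (h.simple_mul cs (by omega))⟩
  · exact ⟨(ReflTransGen.single h).tail (bruhatEdge_simple_mul_of_not_isLeftDescent cs hw),
      (ReflTransGen.single (bruhatEdge_simple_mul_of_isLeftDescent cs hu)).tail h⟩
  · rcases h.length_eq_or_add_three_le cs with hlen | hlen
    · have hsu := h.simple_mul_eq cs hlen hu hw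
      subst hsu
      simp only [cs.simple_mul_simple_cancel_left]
      exact ⟨.refl, .refl⟩
    · have := cs.not_isLeftDescent_iff.mp hu
      have := cs.isLeftDescent_iff.mp hw
      have hs := h.simple_mul cs (i := i) (by omega)
      exact ⟨(ReflTransGen.single hs).tail (bruhatEdge_simple_mul_of_isLeftDescent cs hw),
        (ReflTransGen.single (bruhatEdge_simple_mul_of_not_isLeftDescent cs hu)).tail hs⟩
  · have := cs.not_isLeftDescent_iff.mp hu
    have := cs.not_isLeftDescent_iff.mp hw
    exact ⟨.single (h.simple_mul cs (by omega)), .single h⟩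

lemma reflTransGen_bruhatEdge_leftMax_leftMin {u w : W} (h : ReflTransGen (BruhatEdge cs) u w)
    (i : B) :
    ReflTransGen (BruhatEdge cs) (leftMax cs i u) (leftMax cs i w) ∧
      ReflTransGen (BruhatEdge cs) (leftMin cs i u) (leftMin cs i w) := by
  induction h with
  | refl => exact ⟨.refl, .refl⟩
  | tail _ hvw ih =>
    exact ⟨ih.1.trans (hvw.leftMax_leftMin cs i).1, ih.2.trans (hvw.leftMax_leftMin cs i).2⟩

lemma reflTransGen_bruhatEdge_simple_mul {u w : W} (h : ReflTransGen (BruhatEdge cs) u w) {i : B}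
    (hi : cs.IsLeftDescent u i ↔ cs.IsLeftDescent w i) :
    ReflTransGen (BruhatEdge cs) (s i * u) (s i * w) := by
  obtain ⟨hmax, hmin⟩ := reflTransGen_bruhatEdge_leftMax_leftMin cs h i
  by_cases hw : cs.IsLeftDescent w i
  · simpa [leftMin, hw, hi.mpr hw] using hmin
  · simpa [leftMax, hw, mt hi.mp hw] using hmax

lemma not_isLeftDescent_of_isReduced_cons {i : B} {ω : List B} (h : cs.IsReduced (i :: ω)) :
    ¬cs.IsLeftDescent (π ω) i := by
  have hω : cs.IsReduced ω := by simpa using h.drop 1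
  rw [cs.not_isLeftDescent_iff, ← cs.wordProd_cons, h, hω, List.length_cons]

lemma reflTransGen_bruhatEdge_of_sublist {σ ω : List B} (hω : cs.IsReduced ω)
    (hσ : cs.IsReduced σ) (h : σ.Sublist ω) : ReflTransGen (BruhatEdge cs) (π σ) (π ω) := by
  induction ω generalizing σ with
  | nil => rw [List.sublist_nil.mp h]
  | cons i ω ih =>
    have hω' : cs.IsReduced ω := by simpa using hω.drop 1
    have hasc := not_isLeftDescent_of_isReduced_cons cs hω
    rw [cs.wordProd_cons]
    rcases List.sublist_cons_iff.mp h with hsub | ⟨σ, rfl, hsub⟩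
    · exact (ih hω' hσ hsub).tail (bruhatEdge_simple_mul_of_not_isLeftDescent cs hasc)
    · rw [cs.wordProd_cons]
      exact reflTransGen_bruhatEdge_simple_mul cs (ih hω' (by simpa using hσ.drop 1) hsub)
        (iff_of_false (not_isLeftDescent_of_isReduced_cons cs hσ) hasc)

lemma exists_sublist_of_reflTransGen_bruhatEdge {u w : W} (h : ReflTransGen (BruhatEdge cs) u w)
    {τ : List B} (hτ : cs.IsReduced τ) (hτw : π τ = w) :
    ∃ σ, σ.Sublist τ ∧ cs.IsReduced σ ∧ π σ = u := by
  induction h generalizing τ with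
  | refl => exact ⟨τ, .refl _, hτ, hτw⟩
  | tail _ hvw ih =>
    obtain ⟨t, ht, rfl, hlt⟩ := hvw
    obtain ⟨j, -, hj⟩ := exists_wordProd_eraseIdx_eq_mul cs (ω := τ) (t := t)
      ⟨ht, by rwa [hτw, mul_assoc, ht.mul_self, mul_one]⟩
    obtain ⟨σ', hsub', hσ', hπ'⟩ := exists_sublist_isReduced_wordProd_eq cs (τ.eraseIdx j)
    obtain ⟨σ, hsub, hσ, hπ⟩ := ih hσ'
      (by rw [hπ', hj, hτw, mul_assoc, ht.mul_self, mul_one])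
    exact ⟨σ, hsub.trans (hsub'.trans (List.eraseIdx_sublist τ j)), hσ, hπ⟩

theorem bruhatLE_iff_reflTransGen_bruhatEdge {u w : W} :
    BruhatLE cs u w ↔ ReflTransGen (BruhatEdge cs) u w := by
  constructor
  · rintro ⟨ω, hω, rfl, σ, hsub, hσ, rfl⟩
    exact reflTransGen_bruhatEdge_of_sublist cs hω hσ hsub
  · intro h
    obtain ⟨ω, hω, rfl⟩ := cs.exists_isReduced w
    exact ⟨ω, hω, rfl, exists_sublist_of_reflTransGen_bruhatEdge cs h hω rfl⟩

lemma bruhatLE_simple_mul_iff {u w : W} {i : B}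
    (hi : cs.IsLeftDescent u i ↔ cs.IsLeftDescent w i) :
    BruhatLE cs (s i * u) (s i * w) ↔ BruhatLE cs u w := by
  simp only [bruhatLE_iff_reflTransGen_bruhatEdge]
  refine ⟨fun h => ?_, fun h => reflTransGen_bruhatEdge_simple_mul cs h hi⟩
  have hi' : cs.IsLeftDescent (s i * u) i ↔ cs.IsLeftDescent (s i * w) i := by
    have hflip (v : W) : cs.IsLeftDescent (s i * v) i ↔ ¬cs.IsLeftDescent v i := by
      simpa using cs.isLeftDescent_iff_not_isLeftDescent_mul (w := s i * v) (i := i)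
    rw [hflip, hflip]
    exact hi.not
  simpa using reflTransGen_bruhatEdge_simple_mul cs h hi'

lemma bruhatCov_simple_mul_iff {u w : W} {i : B}
    (hi : cs.IsLeftDescent u i ↔ cs.IsLeftDescent w i) :
    BruhatCov cs (s i * u) (s i * w) ↔ BruhatCov cs u w := by
  have hlen : ℓ (s i * w) = ℓ (s i * u) + 1 ↔ ℓ w = ℓ u + 1 := by
    by_cases hu : cs.IsLeftDescent u i
    · have := cs.isLeftDescent_iff.mp hu
      have := cs.isLeftDescent_iff.mp (hi.mp hu)
      omega
    · have := cs.not_isLeftDescent_iff.mp hu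
      have := cs.not_isLeftDescent_iff.mp (mt hi.mpr hu)
      omega
  simp only [BruhatCov, BruhatLT, bruhatLE_simple_mul_iff cs hi, ne_eq, mul_right_inj, hlen]

end

/-- If `x ∈ W^λ` and `s` is a simple reflection with `s·x ∉ x·W_λ`, then
`s·x ∈ W^λ` and left multiplication by `s` is an isomorphism of directed graphs of
Bruhat covers from `x·W_λ` onto `(s·x)·W_λ`. -/
theorem simple_mul_minRep_of_not_mem_coset
    (cs : CoxeterSystem M W) (S : Set B) (x : W) (s : B)
    (hx : IsMinRep cs S x)
    (hs : cs.simple s * x ∉ leftCosetOf cs S x) :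
    IsMinRep cs S (cs.simple s * x) ∧
    Set.BijOn (fun z => cs.simple s * z) (leftCosetOf cs S x)
      (leftCosetOf cs S (cs.simple s * x)) ∧
    ∀ z ∈ leftCosetOf cs S x, ∀ z' ∈ leftCosetOf cs S x,
      (BruhatCov cs z z' ↔ BruhatCov cs (cs.simple s * z) (cs.simple s * z')) := by
  have hconj : x⁻¹ * cs.simple s * x ∉ paraSubgroup cs S := by
    simpa [leftCosetOf, mul_assoc] using hs
  have hdesc : ∀ z ∈ leftCosetOf cs S x, cs.IsLeftDescent z s ↔ cs.IsLeftDescent x s :=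
    fun z hz => by simpa using isLeftDescent_mul_iff_of_mem cs hz hconj
  refine ⟨?_, bijOn_mul_left_leftCosetOf cs S _ x, fun z hz z' hz' => ?_⟩
  · rw [isMinRep_iff] at hx ⊢
    intro r hr
    rw [isRightInversion_simple_mul_iff cs]
    · exact hx r hr
    · intro hr_eq
      exact hconj (by rwa [← hr_eq, show x⁻¹ * (x * r * x⁻¹) * x = r by group])
  · exact (bruhatCov_simple_mul_iff cs ((hdesc z hz).trans (hdesc z' hz').symm)).symm

end SingularBGG
end

section
/- Let x ∈ W^λ and w ∈ W be such that w ≤ x. Then the set {z ∈ xW_λ : w ≤ z} (that is, the intersection of the Bruhat interval [w, w₀] with the coset xW_λ) is nonempty and has a least element with respect to the Bruhat order. -/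
/-!
Setup: a Coxeter system `(W, S')` with Bruhat order defined via the subword property,
a subset `S` of the simple reflections (indexed by `S : Set B`), the standard parabolic
subgroup `W_λ = ⟨S⟩`, the set `W^λ` of minimal-length left coset representatives, and
the set `W̃^λ` of maximal-length left coset representatives.
-/

namespace SingularBGG

variable {B W : Type*} [Group W] {M : CoxeterMatrix B}

/-- `x` is a maximal-length representative of its left coset `x·W_λ`, i.e.
`x ∈ W̃^λ = W^λ·w₀^λ`. -/
def IsMaxRep (cs : CoxeterSystem M W) (S : Set B) (x : W) : Prop :=
  ∀ z ∈ leftCosetOf cs S x, cs.length z ≤ cs.length x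

end SingularBGG

/-!
The least element is `x` itself. Write `z ∈ x·W_λ` as `x·v` with `v` a product of simple
reflections from `S`, take a reduced word `ω` for `x` and an `S`-word `ν` for `v`, and extract
from `ω ++ ν` a reduced subword for `z`. It splits as `ω' ++ ν'`, where `ω'` is a reduced subword
of `ω` whose product still lies in `x·W_λ`; minimality of `ℓ(x)` forces `ω' = ω`, so `x ≤ z`.

Extracting reduced subwords needs the exchange condition, which we derive from the classical
action of `W` on `W × {±1}` in which `sᵢ` sends `(t, ε)` to `(sᵢ t sᵢ, ε)`, except that the sign
flips when `t = sᵢ`. A word `ω` then changes the sign at `t` according to the parity of the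
number of occurrences of `t` in its right inversion sequence, and this parity only depends on
`cs.wordProd ω`.
-/

open List

theorem List.even_count_of_getElem_add {α : Type*} [BEq α] (l : List α) (p : ℕ)
    (hl : l.length = 2 * p) (h : ∀ k (hk : k < p), l[p + k]'(by omega) = l[k]'(by omega))
    (a : α) : Even (l.count a) := by
  have : l.drop p = l.take p :=
    List.ext_getElem (by simp; omega) fun k _ hk ↦ by simpa using h k (by simp at hk; omega)
  rw [← List.take_append_drop p l, count_append, this]
  exact ⟨_, rfl⟩

namespace CoxeterSystem

variable {B W : Type*} [Group W] {M : CoxeterMatrix B} (cs : CoxeterSystem M W)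

theorem prod_map_alternatingWord {G : Type*} [Monoid G] (f : B → G) (i j : B) (n : ℕ) :
    ((alternatingWord i j (2 * n)).map f).prod = (f i * f j) ^ n := by
  induction n with
  | zero => simp [alternatingWord]
  | succ n ih =>
    rw [show 2 * (n + 1) = 2 * n + 1 + 1 by ring, alternatingWord_succ', alternatingWord_succ']
    simp [ih, pow_succ', mul_assoc, parity_simps]

theorem reverse_alternatingWord (i j : B) (n : ℕ) :
    (alternatingWord i j (2 * n)).reverse = alternatingWord j i (2 * n) := by
  induction n with
  | zero => simp [alternatingWord]
  | succ n ih =>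
    rw [show 2 * (n + 1) = 2 * n + 1 + 1 by ring, alternatingWord_succ', alternatingWord_succ',
      alternatingWord_succ, alternatingWord_succ]
    simp [ih, parity_simps]

theorem wordProd_alternatingWord_two_mul_add (i j : B) (n : ℕ) :
    cs.wordProd (alternatingWord i j (2 * M i j + n)) = cs.wordProd (alternatingWord i j n) := by
  rw [prod_alternatingWord_eq_mul_pow, prod_alternatingWord_eq_mul_pow,
    Nat.mul_add_div two_pos, pow_add, simple_mul_simple_pow, one_mul]
  simp [parity_simps]

section SignRep

variable [DecidableEq W]

theorem even_count_rightInvSeq_alternatingWord (i j : B) (t : W) :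
    Even ((cs.rightInvSeq (alternatingWord i j (2 * M i j))).count t) := by
  -- The `k`-th inversion of an alternating word is the product of an alternating word of length
  -- `2k + 1`, and these products are periodic in `k` with period `M i j`.
  rw [← reverse_reverse (alternatingWord i j _), rightInvSeq_reverse, count_reverse,
    reverse_alternatingWord]
  refine (cs.leftInvSeq _).even_count_of_getElem_add (M i j) (by simp) (fun k hk ↦ ?_) t
  rw [getElem_leftInvSeq_alternatingWord _ _ _ _ _ (by omega),
    getElem_leftInvSeq_alternatingWord _ _ _ _ _ (by omega), mul_add, add_assoc,
    wordProd_alternatingWord_two_mul_add]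

def signedConj (i : B) : Equiv.Perm (W × ℤˣ) :=
  Function.Involutive.toPerm
    (fun p ↦ (cs.simple i * p.1 * cs.simple i, if p.1 = cs.simple i then -p.2 else p.2))
    (by
      rintro ⟨t, ε⟩
      by_cases h : t = cs.simple i <;>
        simp [h, mul_assoc, mul_eq_one_iff_eq_inv, simple_mul_simple_cancel_left])

theorem signedConj_apply (i : B) (p : W × ℤˣ) :
    cs.signedConj i p =
      (cs.simple i * p.1 * cs.simple i, if p.1 = cs.simple i then -p.2 else p.2) :=
  rfl

theorem prod_map_signedConj_apply (ω : List B) (t : W) (ε : ℤˣ) :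
    (ω.map cs.signedConj).prod (t, ε) =
      (cs.wordProd ω * t * (cs.wordProd ω)⁻¹, ε * (-1) ^ (cs.rightInvSeq ω).count t) := by
  induction ω with
  | nil => simp
  | cons i ω ih =>
    have hfix : cs.wordProd ω * t * (cs.wordProd ω)⁻¹ = cs.simple i ↔
        (cs.wordProd ω)⁻¹ * cs.simple i * cs.wordProd ω = t := by
      constructor
      · rintro h; rw [← h]; group
      · rintro rfl; group
    rw [map_cons, prod_cons, Equiv.Perm.mul_apply, ih]
    simp only [signedConj_apply, rightInvSeq, count_cons, wordProd_cons, beq_iff_eq, hfix]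
    refine Prod.ext (by simp [mul_assoc]) ?_
    split_ifs <;> simp [pow_succ]

theorem isLiftable_signedConj : M.IsLiftable cs.signedConj := by
  intro i j
  ext p : 1
  rw [← prod_map_alternatingWord, prod_map_signedConj_apply]
  have hπ : cs.wordProd (alternatingWord i j (2 * M i j)) = 1 := by
    rw [wordProd, prod_map_alternatingWord, simple_mul_simple_pow]
  simp [hπ, (cs.even_count_rightInvSeq_alternatingWord i j p.1).neg_one_pow]

def signRep : W →* Equiv.Perm (W × ℤˣ) :=
  cs.lift ⟨cs.signedConj, cs.isLiftable_signedConj⟩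

theorem signRep_wordProd (ω : List B) :
    cs.signRep (cs.wordProd ω) = (ω.map cs.signedConj).prod := by
  rw [wordProd, map_list_prod, map_map]
  congr 2
  funext i
  exact cs.lift_apply_simple cs.isLiftable_signedConj i

theorem neg_one_pow_count_rightInvSeq_eq {ω ω' : List B} (h : cs.wordProd ω = cs.wordProd ω')
    (t : W) : ((-1 : ℤˣ) ^ (cs.rightInvSeq ω).count t) = (-1) ^ (cs.rightInvSeq ω').count t := by
  simpa [signRep_wordProd, prod_map_signedConj_apply] using
    congrArg (fun w ↦ (cs.signRep w (t, 1)).2) h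

end SignRep

theorem simple_mem_rightInvSeq_of_isRightDescent {ω : List B} {i : B}
    (h : cs.IsRightDescent (cs.wordProd ω) i) : cs.simple i ∈ cs.rightInvSeq ω := by
  classical
  -- For `κ` reduced with product `cs.wordProd ω * sᵢ`, the word `κ ++ [i]` has the same product
  -- as `ω`, and `sᵢ` occurs exactly once in its right inversion sequence.
  obtain ⟨κ, hκ, hκω⟩ := cs.exists_isReduced (cs.wordProd ω * cs.simple i)
  have hnot : cs.simple i ∉ cs.rightInvSeq κ := fun hmem ↦ by
    have := (cs.isRightInversion_of_mem_rightInvSeq hκ hmem).2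
    rw [← hκω, simple_mul_simple_cancel_right] at this
    exact lt_asymm h this
  have hprod : cs.wordProd ω = cs.wordProd (κ.concat i) := by
    rw [wordProd_concat, ← hκω, simple_mul_simple_cancel_right]
  have hcount : (cs.rightInvSeq (κ.concat i)).count (cs.simple i) = 1 := by
    have hmap : cs.simple i ∉ (cs.rightInvSeq κ).map (MulAut.conj (cs.simple i)) := by
      rw [mem_map]
      rintro ⟨t, ht, hts⟩
      have hfix : MulAut.conj (cs.simple i) (cs.simple i) = cs.simple i := by simp
      exact hnot ((MulAut.conj _).injective (hts.trans hfix.symm) ▸ ht)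
    rw [rightInvSeq_concat, concat_eq_append, count_append, count_singleton_self,
      count_eq_zero.mpr hmap]
  have hsign := cs.neg_one_pow_count_rightInvSeq_eq hprod (cs.simple i)
  rw [hcount, pow_one] at hsign
  refine count_pos_iff.mp (Nat.pos_of_ne_zero fun h0 ↦ ?_)
  rw [h0, pow_zero] at hsign
  exact absurd hsign (by decide)

theorem exists_eraseIdx_of_isRightDescent {ω : List B} {i : B}
    (h : cs.IsRightDescent (cs.wordProd ω) i) :
    ∃ j < ω.length, cs.wordProd ω * cs.simple i = cs.wordProd (ω.eraseIdx j) := by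
  obtain ⟨j, hj, hget⟩ := mem_iff_getElem.mp (cs.simple_mem_rightInvSeq_of_isRightDescent h)
  refine ⟨j, by simpa using hj, ?_⟩
  rw [← hget, ← getD_eq_getElem _ 1, wordProd_mul_getD_rightInvSeq]

theorem exists_isReduced_sublist (ω : List B) :
    ∃ ω' : List B, ω' <+ ω ∧ cs.IsReduced ω' ∧ cs.wordProd ω' = cs.wordProd ω := by
  induction ω using List.reverseRecOn with
  | nil => exact ⟨[], Sublist.refl _, by simp [IsReduced], rfl⟩
  | append_singleton ω i ih =>
    obtain ⟨ω', hsub, hred, hprod⟩ := ih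
    have hprod_i : cs.wordProd (ω' ++ [i]) = cs.wordProd (ω ++ [i]) := by
      rw [wordProd_append, wordProd_append, hprod]
    rcases cs.length_mul_simple (cs.wordProd ω') i with hup | hdown
    · refine ⟨ω' ++ [i], hsub.append (Sublist.refl _), ?_, hprod_i⟩
      rw [IsReduced, wordProd_append, wordProd_singleton, hup, hred.eq, length_append,
        length_singleton]
    · obtain ⟨j, hj, herase⟩ :=
        cs.exists_eraseIdx_of_isRightDescent (ω := ω') (i := i) (by unfold IsRightDescent; omega)
      refine ⟨ω'.eraseIdx j, (eraseIdx_sublist _ _).trans (hsub.trans (sublist_append_left _ _)),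
        ?_, by rw [← herase, ← hprod_i, wordProd_append, wordProd_singleton]⟩
      rw [IsReduced, ← herase, length_eraseIdx_of_lt hj, ← hred.eq]
      omega

end CoxeterSystem

namespace SingularBGG

open CoxeterSystem

variable {B W : Type*} [Group W] {M : CoxeterMatrix B}

theorem wordProd_mem_paraSubgroup (cs : CoxeterSystem M W) {S : Set B} {ω : List B}
    (hω : ∀ b ∈ ω, b ∈ S) : cs.wordProd ω ∈ paraSubgroup cs S := by
  refine list_prod_mem fun w hw ↦ ?_
  obtain ⟨b, hb, rfl⟩ := mem_map.mp hw
  exact Subgroup.subset_closure ⟨b, hω b hb, rfl⟩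

theorem exists_word_of_mem_paraSubgroup (cs : CoxeterSystem M W) {S : Set B} {v : W}
    (hv : v ∈ paraSubgroup cs S) : ∃ ω : List B, (∀ b ∈ ω, b ∈ S) ∧ cs.wordProd ω = v := by
  induction hv using Subgroup.closure_induction with
  | mem _ hv =>
    obtain ⟨i, hi, rfl⟩ := hv
    exact ⟨[i], by simpa using hi, wordProd_singleton _ _⟩
  | one => exact ⟨[], by simp, wordProd_nil _⟩
  | mul _ _ _ _ hu hv =>
    obtain ⟨ω, hωS, rfl⟩ := hu
    obtain ⟨ω', hω'S, rfl⟩ := hv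
    exact ⟨ω ++ ω', by simpa using fun b ↦ Or.rec (hωS b) (hω'S b), wordProd_append _ _ _⟩
  | inv _ _ hu =>
    obtain ⟨ω, hωS, rfl⟩ := hu
    exact ⟨ω.reverse, by simpa using hωS, wordProd_reverse _ _⟩

theorem IsMinRep.bruhatLE_of_mem_leftCosetOf {cs : CoxeterSystem M W} {S : Set B} {x z : W}
    (hx : IsMinRep cs S x) (hz : z ∈ leftCosetOf cs S x) : BruhatLE cs x z := by
  obtain ⟨ω, hω, rfl⟩ := cs.exists_isReduced x
  obtain ⟨ν, hνS, hν⟩ := exists_word_of_mem_paraSubgroup cs hz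
  have hprod : cs.wordProd (ω ++ ν) = z := by rw [wordProd_append, hν, mul_inv_cancel_left]
  obtain ⟨ρ, hρsub, hρ, hρprod⟩ := cs.exists_isReduced_sublist (ω ++ ν)
  obtain ⟨ω', ν', rfl, hω', hν'⟩ := sublist_append_iff.mp hρsub
  have hω'red : cs.IsReduced ω' := by simpa using hρ.take ω'.length
  have hmem : cs.wordProd ω' ∈ leftCosetOf cs S (cs.wordProd ω) := by
    have : cs.wordProd ω' = z * (cs.wordProd ν')⁻¹ := by
      rw [← hprod, ← hρprod, wordProd_append, mul_inv_cancel_right]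
    rw [leftCosetOf, Set.mem_ofPred_eq, this, ← mul_assoc]
    exact mul_mem hz (inv_mem (wordProd_mem_paraSubgroup cs fun b hb ↦ hνS b (hν'.subset hb)))
  have hlen := hx _ hmem
  rw [hω.eq, hω'red.eq] at hlen
  have hω'ω : ω' = ω := hω'.eq_of_length (le_antisymm hω'.length_le hlen)
  exact ⟨ω' ++ ν', hρ, hρprod.trans hprod, ω', sublist_append_left _ _, hω'red, by rw [hω'ω]⟩

theorem exists_least_of_interval_inter_coset_general
    (cs : CoxeterSystem M W) (S : Set B) (x w : W)
    (hx : IsMinRep cs S x)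
    (hwx : BruhatLE cs w x) :
    ∃ m ∈ {z ∈ leftCosetOf cs S x | BruhatLE cs w z},
      ∀ z ∈ {z ∈ leftCosetOf cs S x | BruhatLE cs w z}, BruhatLE cs m z := by
  have hxx : x ∈ leftCosetOf cs S x := by simp [leftCosetOf, one_mem]
  exact ⟨x, ⟨hxx, hwx⟩, fun z hz ↦ hx.bruhatLE_of_mem_leftCosetOf hz.1⟩

/-- Assume `W` is finite. If `x ∈ W^λ`, `w ∈ W` and `w ≤ x`, then the
intersection `[w, w₀] ∩ x·W_λ = {z ∈ x·W_λ : w ≤ z}` is nonempty and has a least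
element in the Bruhat order. -/
theorem exists_least_of_interval_inter_coset
    [Finite W] (cs : CoxeterSystem M W) (S : Set B) (x w : W)
    (hx : IsMinRep cs S x)
    (hwx : BruhatLE cs w x) :
    ∃ m ∈ {z ∈ leftCosetOf cs S x | BruhatLE cs w z},
      ∀ z ∈ {z ∈ leftCosetOf cs S x | BruhatLE cs w z}, BruhatLE cs m z :=
  exists_least_of_interval_inter_coset_general cs S x w hx hwx

end SingularBGG
end

section
/- If the sequence A →α B →(β,γ) C ⊕ G →M D ⊕ G →(δ,δ') E →ε F is a complex (i.e. every composite of two consecutive maps is zero), then the sequence A →α B →β C →(f − h∘g) D →δ E →ε F is also a complex; and if the first sequence is exact (at B, at C ⊕ G, at D ⊕ G, and at E), then the second sequence is exact (at B, at C, at D, and at E). -/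
/-!
The middle map is the block matrix `[[f, h], [g, 1]]`, and eliminating its identity block by a
shear of `C × G` and a shear of `D × G` turns it into `(f - h ∘ g) × id_G`. The vanishing of the
composites forces `γ = -g ∘ β` and `δ' = -δ ∘ h`, and then the same shears carry `(β, γ)` to
`(β, 0)` and `(δ, δ')` to `δ ∘ fst`: up to isomorphism the first sequence is the second one plus
the exact summand `0 → G = G → 0`, which can be cut off without affecting exactness.
-/

section

open LinearMap Function

variable {R : Type*} [Ring R] {A B C D E F G : Type*}
  [AddCommGroup A] [AddCommGroup B] [AddCommGroup C] [AddCommGroup D]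
  [AddCommGroup E] [AddCommGroup F] [AddCommGroup G]
  [Module R A] [Module R B] [Module R C] [Module R D]
  [Module R E] [Module R F] [Module R G]

def shearFst (h : G →ₗ[R] D) : (D × G) ≃ₗ[R] D × G :=
  LinearEquiv.ofLinearMap ((fst R D G + h ∘ₗ snd R D G).prod (snd R D G))
    ((fst R D G - h ∘ₗ snd R D G).prod (snd R D G)) (by ext <;> simp) (by ext <;> simp)

@[simp]
lemma shearFst_apply (h : G →ₗ[R] D) (x : D × G) : shearFst h x = (x.1 + h x.2, x.2) := rfl

-- `[[f, h], [g, 1]] * [[1, 0], [-g, 1]] = [[1, h], [0, 1]] * [[f - h g, 0], [0, 1]]`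
lemma coprod_prod_coprod_comp_skewProd (f : C →ₗ[R] D) (g : C →ₗ[R] G) (h : G →ₗ[R] D) :
    (f.coprod h).prod (g.coprod id) ∘ₗ
        ((LinearEquiv.refl R C).skewProd (LinearEquiv.refl R G) (-g) : C × G →ₗ[R] C × G) =
      (shearFst h : D × G →ₗ[R] D × G) ∘ₗ (f - h ∘ₗ g).prodMap (id : G →ₗ[R] G) := by
  ext <;> simp [sub_eq_add_neg]

lemma exact_inl_comp_prodMap_id_iff (β : B →ₗ[R] C) (φ : C →ₗ[R] D) :
    Exact (inl R C G ∘ₗ β) (φ.prodMap (id : G →ₗ[R] G)) ↔ Exact β φ := by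
  simp only [Exact, Prod.forall, coe_comp, comp_apply, prodMap_apply, id_coe, id_eq,
    Prod.mk_eq_zero, Set.mem_range, coe_inl, Prod.mk.injEq]
  exact ⟨fun H c => by simpa using H c 0,
    fun H c x => by rw [H c, eq_comm (a := (0 : G)), exists_and_right]⟩

lemma exact_prodMap_id_fst_comp_iff (φ : C →ₗ[R] D) (δ : D →ₗ[R] E) :
    Exact (φ.prodMap (id : G →ₗ[R] G)) (δ ∘ₗ fst R D G) ↔ Exact φ δ := by
  simp [Exact]

lemma exact_prod_comp_iff (α : A →ₗ[R] B) (β : B →ₗ[R] C) (k : C →ₗ[R] G) :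
    Exact α (β.prod (k ∘ₗ β)) ↔ Exact α β := by
  change Exact α (LinearMap.id.prod k ∘ₗ β) ↔ _
  exact Injective.comp_exact_iff_exact fun x y hxy => congrArg Prod.fst hxy

lemma exact_coprod_comp_iff (δ : D →ₗ[R] E) (k : G →ₗ[R] D) (ε : E →ₗ[R] F) :
    Exact (δ.coprod (δ ∘ₗ k)) ε ↔ Exact δ ε := by
  rw [show δ.coprod (δ ∘ₗ k) = δ ∘ₗ LinearMap.id.coprod k by
    rw [comp_coprod, LinearMap.comp_id]]
  exact Surjective.comp_exact_iff_exact fun d => ⟨(d, 0), by simp⟩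

lemma exact_prod_neg_comp_coprod_prod_coprod_iff (β : B →ₗ[R] C) (f : C →ₗ[R] D)
    (g : C →ₗ[R] G) (h : G →ₗ[R] D) :
    Exact (β.prod ((-g) ∘ₗ β)) ((f.coprod h).prod (g.coprod id)) ↔ Exact β (f - h ∘ₗ g) :=
  (Exact.iff_of_ladder_linearEquiv (e₁ := LinearEquiv.refl R B)
    (e₂ := (LinearEquiv.refl R C).skewProd (LinearEquiv.refl R G) (-g)) (e₃ := shearFst h)
    (by ext <;> simp) (coprod_prod_coprod_comp_skewProd f g h)).trans
    (exact_inl_comp_prodMap_id_iff β _)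

lemma exact_coprod_prod_coprod_coprod_comp_neg_iff (f : C →ₗ[R] D) (g : C →ₗ[R] G)
    (h : G →ₗ[R] D) (δ : D →ₗ[R] E) :
    Exact ((f.coprod h).prod (g.coprod id)) (δ.coprod (δ ∘ₗ (-h))) ↔ Exact (f - h ∘ₗ g) δ :=
  (Exact.iff_of_ladder_linearEquiv
    (e₁ := (LinearEquiv.refl R C).skewProd (LinearEquiv.refl R G) (-g)) (e₂ := shearFst h)
    (e₃ := LinearEquiv.refl R E) (coprod_prod_coprod_comp_skewProd f g h)
    (by ext <;> simp)).trans (exact_prodMap_id_fst_comp_iff _ δ)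

lemma eq_neg_comp_of_coprod_prod_coprod_comp_prod_eq_zero {β : B →ₗ[R] C} {γ : B →ₗ[R] G}
    {f : C →ₗ[R] D} {g : C →ₗ[R] G} {h : G →ₗ[R] D}
    (H : (f.coprod h).prod (g.coprod id) ∘ₗ β.prod γ = 0) : γ = (-g) ∘ₗ β := by
  ext b
  simpa [eq_neg_iff_add_eq_zero, add_comm] using congr(($H b).2)

lemma eq_comp_neg_of_coprod_comp_coprod_prod_coprod_eq_zero {f : C →ₗ[R] D} {g : C →ₗ[R] G}
    {h : G →ₗ[R] D} {δ : D →ₗ[R] E} {δ' : G →ₗ[R] E}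
    (H : δ.coprod δ' ∘ₗ (f.coprod h).prod (g.coprod id) = 0) : δ' = δ ∘ₗ (-h) := by
  ext x
  simpa [eq_neg_iff_add_eq_zero, add_comm] using congr($H (0, x))

end

theorem cutting_off_equalities
    {R : Type*} [Ring R] {A B C D E F G : Type*}
    [AddCommGroup A] [AddCommGroup B] [AddCommGroup C] [AddCommGroup D]
    [AddCommGroup E] [AddCommGroup F] [AddCommGroup G]
    [Module R A] [Module R B] [Module R C] [Module R D]
    [Module R E] [Module R F] [Module R G]
    (α : A →ₗ[R] B) (β : B →ₗ[R] C) (γ : B →ₗ[R] G)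
    (f : C →ₗ[R] D) (g : C →ₗ[R] G) (h : G →ₗ[R] D)
    (δ : D →ₗ[R] E) (δ' : G →ₗ[R] E) (ε : E →ₗ[R] F)
    -- the map `B → C ⊕ G`, `b ↦ (β b, γ b)`
    (m₁ : B →ₗ[R] C × G) (hm₁ : m₁ = β.prod γ)
    -- the middle map `M : C ⊕ G → D ⊕ G`, `(c, x) ↦ (f c + h x, g c + x)`
    (m : C × G →ₗ[R] D × G)
    (hm : m = (f.comp (LinearMap.fst R C G) + h.comp (LinearMap.snd R C G)).prod
      (g.comp (LinearMap.fst R C G) + LinearMap.snd R C G))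
    -- the map `D ⊕ G → E`, `(d, x) ↦ δ d + δ' x`
    (m₂ : D × G →ₗ[R] E) (hm₂ : m₂ = δ.comp (LinearMap.fst R D G) + δ'.comp (LinearMap.snd R D G)) :
    -- if the first sequence is a complex, then so is the second
    ((m₁.comp α = 0 ∧ m.comp m₁ = 0 ∧ m₂.comp m = 0 ∧ ε.comp m₂ = 0) →
      (β.comp α = 0 ∧ (f - h.comp g).comp β = 0 ∧
        δ.comp (f - h.comp g) = 0 ∧ ε.comp δ = 0)) ∧
    -- if the first sequence is exact (at B, C ⊕ G, D ⊕ G, E), then the second is exact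
    -- (at B, C, D, E)
    ((Function.Exact α m₁ ∧ Function.Exact m₁ m ∧ Function.Exact m m₂ ∧
        Function.Exact m₂ ε) →
      (Function.Exact α β ∧ Function.Exact β (f - h.comp g) ∧
        Function.Exact (f - h.comp g) δ ∧ Function.Exact δ ε)) := by
  obtain rfl := hm₁
  obtain rfl : m = (f.coprod h).prod (g.coprod LinearMap.id) := hm
  obtain rfl : m₂ = δ.coprod δ' := hm₂
  refine ⟨fun ⟨h₁, h₂, h₃, h₄⟩ => ?_, fun ⟨e₁, e₂, e₃, e₄⟩ => ?_⟩
  · obtain rfl := eq_neg_comp_of_coprod_prod_coprod_comp_prod_eq_zero h₂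
    refine ⟨?_, ?_, ?_, ?_⟩ <;> ext x
    · simpa using congr(($h₁ x).1)
    · simpa [sub_eq_add_neg] using congr(($h₂ x).1)
    · -- `m (c, -g c) = (f c - h (g c), 0)`
      simpa [sub_eq_add_neg] using congr($h₃ (x, -g x))
    · simpa using congr($h₄ (x, 0))
  · obtain rfl := eq_neg_comp_of_coprod_prod_coprod_comp_prod_eq_zero e₂.linearMap_comp_eq_zero
    obtain rfl := eq_comp_neg_of_coprod_comp_coprod_prod_coprod_eq_zero e₃.linearMap_comp_eq_zero
    exact ⟨(exact_prod_comp_iff α β (-g)).1 e₁,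
      (exact_prod_neg_comp_coprod_prod_coprod_iff β f g h).1 e₂,
      (exact_coprod_prod_coprod_coprod_comp_neg_iff f g h δ).1 e₃,
      (exact_coprod_comp_iff δ (-h) ε).1 e₄⟩
end
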